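/- arXiv:1407.3903 — 4 statements merged into one kernel-verified Lean document; each statement's English description precedes it below -/
import Mathlib

section
/- Let C ∈ U(l) and A ∈ GL(l,ℂ), and let 𝒰 = {Id + X : X ∈ U(l)} ⊂ M(l×l, ℂ). If C·𝒰·A* = 𝒰 then A = C. -/
open Matrix
open Complex


theorem aux2 (l : ℕ) (C A Y : Matrix (Fin l) (Fin l) ℂ) (hC : Cᴴ * C = 1)
    (u : ℂ) (hu : star u * u = 2) (hY : Yᴴ * Y = 1)
    (hYeq : Y = u • (C * Aᴴ) - 1) :
    (2:ℂ) • (A * Aᴴ) = u • (C * Aᴴ) + star u • (A * Cᴴ) := by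
  subst hYeq
  have hstar : (u • (C * Aᴴ) - 1)ᴴ = star u • (A * Cᴴ) - 1 := by
    simp [conjTranspose_sub, conjTranspose_smul, conjTranspose_mul]
  rw [hstar] at hY
  have key : A * (Cᴴ * (C * Aᴴ)) = A * Aᴴ := by
    rw [← mul_assoc Cᴴ, hC, one_mul]
  have hexp : (star u • (A * Cᴴ) - 1) * (u • (C * Aᴴ) - 1)
      = (u * star u) • (A * (Cᴴ * (C * Aᴴ))) - star u • (A * Cᴴ) - u • (C * Aᴴ) + 1 := by
    simp only [sub_mul, mul_sub, Matrix.smul_mul, Matrix.mul_smul, smul_smul, mul_assoc, mul_one,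
      one_mul, smul_sub, sub_one_mul]
    abel
  rw [hexp, mul_comm u (star u), hu, key] at hY
  have h4 : (2:ℂ) • (A * Aᴴ) - star u • (A * Cᴴ) - u • (C * Aᴴ) = 0 := by
    have := congrArg (· - 1) hY; simpa using this
  have h5 : (2:ℂ) • (A * Aᴴ) - (u • (C * Aᴴ) + star u • (A * Cᴴ)) = 0 := by
    rw [← h4]; abel
  exact sub_eq_zero.mp h5

theorem key_eq (l : ℕ) (C A : Matrix (Fin l) (Fin l) ℂ)
    (hC : C ∈ Matrix.unitaryGroup (Fin l) ℂ)
    (h : {M : Matrix (Fin l) (Fin l) ℂ |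
            ∃ X ∈ Matrix.unitaryGroup (Fin l) ℂ, M = C * (1 + X) * Aᴴ} =
         {M : Matrix (Fin l) (Fin l) ℂ |
            ∃ X ∈ Matrix.unitaryGroup (Fin l) ℂ, M = 1 + X})
    (u : ℂ) (huu : star u * u = 1) (hu2 : star (1 + u) * (1 + u) = 2) :
    (2:ℂ) • (A * Aᴴ) = (1 + u) • (C * Aᴴ) + star (1 + u) • (A * Cᴴ) := by
  have hmem : (u • (1 : Matrix (Fin l) (Fin l) ℂ)) ∈ Matrix.unitaryGroup (Fin l) ℂ := by
    have h1 : (starRingEnd ℂ) u * u = 1 := huu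
    have h2 : u * (starRingEnd ℂ) u = 1 := by rw [mul_comm]; exact huu
    constructor <;>
      simp [star_smul, Matrix.smul_mul, Matrix.mul_smul, smul_smul, h1, h2]
  have hin : C * (1 + u • (1 : Matrix (Fin l) (Fin l) ℂ)) * Aᴴ ∈
      {M : Matrix (Fin l) (Fin l) ℂ | ∃ X ∈ Matrix.unitaryGroup (Fin l) ℂ, M = 1 + X} := by
    rw [← h]; exact ⟨_, hmem, rfl⟩
  obtain ⟨Y, hY, hYeq⟩ := hin
  have hform : C * (1 + u • (1 : Matrix (Fin l) (Fin l) ℂ)) * Aᴴ = (1 + u) • (C * Aᴴ) := by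
    simp [mul_add, add_mul, Matrix.mul_smul, Matrix.smul_mul, add_smul, one_smul]
  have hYeq' : Y = (1 + u) • (C * Aᴴ) - 1 := by
    rw [← hform, hYeq]; abel
  exact aux2 l C A Y hC.1 _ hu2 hY.1 hYeq'



/-- If `C ∈ U(l)`, `A ∈ GL(l,ℂ)` and `C·𝒰·Aᴴ = 𝒰` where `𝒰 = {1 + X : X ∈ U(l)}`,
then `A = C`. -/
theorem stmt4 (l : ℕ) (C A : Matrix (Fin l) (Fin l) ℂ)
    (hC : C ∈ Matrix.unitaryGroup (Fin l) ℂ) (hA : IsUnit A)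
    (h : {M : Matrix (Fin l) (Fin l) ℂ |
            ∃ X ∈ Matrix.unitaryGroup (Fin l) ℂ, M = C * (1 + X) * Aᴴ} =
         {M : Matrix (Fin l) (Fin l) ℂ |
            ∃ X ∈ Matrix.unitaryGroup (Fin l) ℂ, M = 1 + X}) :
    A = C := by
  have E1 := key_eq l C A hC h Complex.I (by norm_num [Complex.ext_iff])
    (by norm_num [Complex.ext_iff])
  have E2 := key_eq l C A hC h (-Complex.I) (by norm_num [Complex.ext_iff])
    (by norm_num [Complex.ext_iff])
  have hs1 : star ((1:ℂ) + Complex.I) = 1 - Complex.I := by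
    simp [Complex.ext_iff]
  have hs2 : star ((1:ℂ) + -Complex.I) = 1 + Complex.I := by
    simp [Complex.ext_iff]
  rw [hs1] at E1
  rw [hs2] at E2
  set Q := C * Aᴴ with hQ
  set P := A * Cᴴ with hP
  have hkey : (1 + Complex.I) • Q + (1 - Complex.I) • P
      = (1 + -Complex.I) • Q + (1 + Complex.I) • P := E1.symm.trans E2
  have h0 : ((2:ℂ) * Complex.I) • (Q - P) = 0 := by
    have hz := sub_eq_zero.mpr hkey
    rw [← hz]
    module
  have hQP : Q = P := by
    rcases smul_eq_zero.mp h0 with h' | h'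
    · exfalso; simp [Complex.ext_iff] at h'
    · exact sub_eq_zero.mp h'
  have hAA : (2:ℂ) • (A * Aᴴ) = (2:ℂ) • Q := by
    rw [E1, ← hQP]; module
  have hAAQ : A * Aᴴ = C * Aᴴ := by
    have := smul_right_injective (Matrix (Fin l) (Fin l) ℂ) (two_ne_zero (α := ℂ)) hAA
    exact this
  have hAH : IsUnit Aᴴ := (Matrix.isUnit_conjTranspose A).mpr hA
  obtain ⟨uA, huA⟩ := hAH
  have : A * uA.val = C * uA.val := by rw [huA]; exact hAAQ
  calc A = A * uA.val * uA.inv := by rw [mul_assoc, uA.val_inv, mul_one]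
    _ = C * uA.val * uA.inv := by rw [this]
    _ = C := by rw [mul_assoc, uA.val_inv, mul_one]
end

section
/- The image of the set 𝒰 = {Id + X : X ∈ U(l)} under the matrix inversion map W ↦ W^{-1} (defined where the matrix is invertible) is the set ℒ = {W ∈ M(l×l,ℂ) : Id - W* - W = 0} = (1/2)Id + u(l), intersected with the invertible matrices. -/
/-!
If `X` is unitary then `(1 + X)ᴴ (1 + X) = (1 + X) + (1 + X)ᴴ`; multiplying on the left by `Wᴴ`
and on the right by `W = (1 + X)⁻¹` turns this into `1 = Wᴴ + W`. The computation reverses, and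
uses only the axioms of a star ring.
-/

namespace Units

variable {R : Type*} [Ring R] [StarRing R]

theorem star_mul_self_eq_star_add_self_iff (v : Rˣ) :
    star (v : R) * v = star (v : R) + v ↔ star (↑v⁻¹ : R) + ↑v⁻¹ = 1 := by
  set w : R := ↑v⁻¹
  have hwv : star w * star (v : R) = 1 := by rw [← star_mul, v.mul_inv, star_one]
  have hvw : star (v : R) * star w = 1 := by rw [← star_mul, v.inv_mul, star_one]
  constructor
  · intro h
    calc star w + w = star w * (star (v : R) + v) * w := by
          rw [mul_add, add_mul, hwv, one_mul, mul_assoc, v.mul_inv, mul_one, add_comm]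
      _ = (star w * star (v : R)) * (v * w) := by rw [← h]; noncomm_ring
      _ = 1 := by rw [hwv, v.mul_inv, one_mul]
  · intro h
    calc star (v : R) * v = star (v : R) * (star w + w) * v := by rw [h, mul_one]
      _ = star (v : R) + v := by
          rw [mul_add, add_mul, hvw, one_mul, mul_assoc, v.inv_mul, mul_one, add_comm]

theorem mul_star_self_eq_self_add_star_iff (v : Rˣ) :
    (v : R) * star (v : R) = v + star (v : R) ↔ star (↑v⁻¹ : R) + ↑v⁻¹ = 1 := by
  have := star_mul_self_eq_star_add_self_iff (star v)
  simp only [coe_star, coe_star_inv, star_star] at this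
  rw [this, add_comm]

theorem sub_one_mem_unitary_iff (v : Rˣ) :
    (v : R) - 1 ∈ unitary R ↔ star (↑v⁻¹ : R) + ↑v⁻¹ = 1 := by
  have hl : star ((v : R) - 1) * ((v : R) - 1) - 1 = star (v : R) * v - (star (v : R) + v) := by
    rw [star_sub, star_one]; noncomm_ring
  have hr : ((v : R) - 1) * star ((v : R) - 1) - 1 = v * star (v : R) - (v + star (v : R)) := by
    rw [star_sub, star_one]; noncomm_ring
  rw [Unitary.mem_iff, ← sub_eq_zero, hl, sub_eq_zero, ← sub_eq_zero (a := _ * star _), hr,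
    sub_eq_zero, star_mul_self_eq_star_add_self_iff, mul_star_self_eq_self_add_star_iff, and_self]

end Units

open Matrix

/-- The image of `𝒰 = {1 + X : X ∈ U(l)}` under matrix inversion (where defined) is the set
`ℒ = {W : 1 - Wᴴ - W = 0}` intersected with the invertible matrices. -/
theorem stmt7 (l : ℕ) :
    {W : Matrix (Fin l) (Fin l) ℂ |
        ∃ X ∈ Matrix.unitaryGroup (Fin l) ℂ, IsUnit (1 + X) ∧ W = (1 + X)⁻¹} =
      {W : Matrix (Fin l) (Fin l) ℂ | 1 - Wᴴ - W = 0 ∧ IsUnit W} := by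
  ext W
  simp only [Set.mem_ofPred_eq, sub_sub, sub_eq_zero, eq_comm (a := (1 : Matrix _ _ ℂ)),
    ← star_eq_conjTranspose]
  constructor
  · rintro ⟨X, hX, ⟨v, hv⟩, rfl⟩
    have hXv : X = (v : Matrix (Fin l) (Fin l) ℂ) - 1 := by rw [hv]; abel
    rw [← hv, ← coe_units_inv]
    exact ⟨v.sub_one_mem_unitary_iff.mp (hXv ▸ hX), v⁻¹.isUnit⟩
  · rintro ⟨hW, w, rfl⟩
    have hX : (1 : Matrix (Fin l) (Fin l) ℂ) + (↑w⁻¹ - 1) = ↑w⁻¹ := add_sub_cancel _ _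
    refine ⟨(↑w⁻¹ : Matrix (Fin l) (Fin l) ℂ) - 1, (w⁻¹).sub_one_mem_unitary_iff.mpr ?_, ?_, ?_⟩
    · rwa [inv_inv]
    · rw [hX]
      exact w⁻¹.isUnit
    · rw [hX, ← coe_units_inv, inv_inv]
end

section
/- Let v_∞ = span(e₁,…,e_m) ⊂ ℂ^{m+n} with the Hermitian form h given by [[0,0,Id],[0,-Id,0],[Id,0,0]]. The map A ↦ (column span of [A*; Id_{n-m}; 0])^⊥ is a bijection from M((n-m)×m, ℂ) onto the set of 2m-dimensional subspaces V of ℂ^{m+n} containing v_∞ such that h|_V has signature (m,m). -/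
open Matrix Module

/-- The Hermitian pairing `h(u,v) = u* H v` associated to a matrix `H`. -/
noncomputable def sform {ι : Type*} [Fintype ι] (H : Matrix ι ι ℂ) (u v : ι → ℂ) : ℂ :=
  star u ⬝ᵥ H.mulVec v

/-- The orthogonal complement `V^⊥ = {w : h(w,v) = 0 for all v ∈ V}` with respect to the
Hermitian form given by the matrix `H`. -/
noncomputable def hperp {ι : Type*} [Fintype ι] (H : Matrix ι ι ℂ) (V : Submodule ℂ (ι → ℂ)) :
    Submodule ℂ (ι → ℂ) where
  carrier := {w | ∀ v ∈ V, star w ⬝ᵥ H.mulVec v = 0}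
  zero_mem' := by intro v hv; simp
  add_mem' := by
    intro a b ha hb v hv
    have h1 := ha v hv
    have h2 := hb v hv
    simp only [star_add, add_dotProduct, h1, h2, add_zero]
  smul_mem' := by
    intro c a ha v hv
    have h1 := ha v hv
    simp only [star_smul, smul_dotProduct, h1, smul_zero]

/-- The restriction of the Hermitian form given by `H` to the subspace `W` has
signature `(p, q)`. -/
noncomputable def SigOn {ι : Type*} [Fintype ι] (H : Matrix ι ι ℂ)
    (W : Submodule ℂ (ι → ℂ)) (p q : ℕ) : Prop :=
  ∃ P N : Submodule ℂ (ι → ℂ), P ≤ W ∧ N ≤ W ∧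
    finrank ℂ P = p ∧ finrank ℂ N = q ∧
    (∀ v ∈ P, v ≠ 0 → 0 < (sform H v v).re) ∧
    (∀ v ∈ N, v ≠ 0 → (sform H v v).re < 0) ∧
    P ⊓ N = ⊥ ∧ P ⊔ N = W


/-- The Hermitian form of signature `(m, n)` (with `l = n - m`) on `ℂ^{m+n}` given by the
block matrix `[[0,0,1],[0,-1,0],[1,0,0]]` with blocks of sizes `m`, `l`, `m`. -/
def Hmat (m l : ℕ) :
    Matrix (Fin m ⊕ (Fin l ⊕ Fin m)) (Fin m ⊕ (Fin l ⊕ Fin m)) ℂ :=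
  fromBlocks 0 (fromCols 0 1) (fromRows 0 1) (fromBlocks (-1) 0 0 0)

/-- The maximal isotropic subspace `v_∞ = span(e₁,…,e_m)`, realized as the column span of
the stacked matrix `[1; 0; 0]`. -/
noncomputable def vinf (m l : ℕ) : Submodule ℂ ((Fin m ⊕ (Fin l ⊕ Fin m)) → ℂ) :=
  LinearMap.range (Matrix.mulVecLin
    (fromRows (1 : Matrix (Fin m) (Fin m) ℂ)
      (fromRows (0 : Matrix (Fin l) (Fin m) ℂ) (0 : Matrix (Fin m) (Fin m) ℂ))))

/-! The space `(span [A*; 1; 0])^⊥` is the graph `{w | w₂ = A w₃}`: it has dimension `2m`,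
contains `v_∞`, and `h(w, w) = 2 Re ⟨w₁, w₃⟩ - |w₂|²` on it has signature `(m, m)`, with positive
and negative parts `w₁ = ± w₃ + ½ A*A w₃`. Conversely, let `V` be as in the theorem. Since
`h ≤ 0` on `{w₃ = 0}`, the space `V ∩ {w₃ = 0}` meets an `m`-dimensional positive subspace of `V`
trivially, so it has dimension at most `m` and equals `v_∞`. As `w₂` vanishes on `v_∞`, it factors
through `w₃` on `V`; hence `V` lies in the graph of some `A`, and equals it by dimension count. -/

theorem LinearMap.exists_comp_eq_of_ker_le {K V W X : Type*} [Field K] [AddCommGroup V]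
    [Module K V] [AddCommGroup W] [Module K W] [AddCommGroup X] [Module K X]
    (f : V →ₗ[K] W) (g : V →ₗ[K] X) (hfg : ker f ≤ ker g) : ∃ h : W →ₗ[K] X, h ∘ₗ f = g := by
  obtain ⟨h, hh⟩ :=
    LinearMap.exists_extend ((ker f).liftQ g hfg ∘ₗ f.quotKerEquivRange.symm.toLinearMap)
  refine ⟨h, LinearMap.ext fun v => ?_⟩
  have hv : f.quotKerEquivRange.symm ⟨f v, v, rfl⟩ = (ker f).mkQ v :=
    f.quotKerEquivRange.symm_apply_eq.2 rfl
  simpa [hv] using congr($hh ⟨f v, v, rfl⟩)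

section Signature

variable {ι : Type*} [Fintype ι] {H : Matrix ι ι ℂ}

theorem sigOn_of_definite {W P N : Submodule ℂ (ι → ℂ)} (hPW : P ≤ W) (hNW : N ≤ W)
    (hP : ∀ v ∈ P, v ≠ 0 → 0 < (sform H v v).re) (hN : ∀ v ∈ N, v ≠ 0 → (sform H v v).re < 0)
    (hdim : finrank ℂ W ≤ finrank ℂ P + finrank ℂ N) :
    SigOn H W (finrank ℂ P) (finrank ℂ N) := by
  have hPN : P ⊓ N = ⊥ := by
    refine (Submodule.eq_bot_iff _).2 fun v ⟨hvP, hvN⟩ => ?_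
    by_contra hv
    linarith [hP v hvP hv, hN v hvN hv]
  refine ⟨P, N, hPW, hNW, rfl, rfl, hP, hN, hPN, ?_⟩
  refine Submodule.eq_of_le_of_finrank_le (sup_le hPW hNW) ?_
  have := Submodule.finrank_sup_add_finrank_inf_eq P N
  rw [hPN, finrank_bot] at this
  omega

theorem SigOn.finrank_add_le_of_nonpos {V W : Submodule ℂ (ι → ℂ)} {p q : ℕ}
    (hV : SigOn H V p q) (hWV : W ≤ V) (hW : ∀ w ∈ W, (sform H w w).re ≤ 0) :
    finrank ℂ W + p ≤ finrank ℂ V := by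
  obtain ⟨P, -, hPV, -, rfl, -, hP, -⟩ := hV
  have hPW : P ⊓ W = ⊥ := by
    refine (Submodule.eq_bot_iff _).2 fun v ⟨hvP, hvW⟩ => ?_
    by_contra hv
    linarith [hP v hvP hv, hW v hvW]
  have := Submodule.finrank_sup_add_finrank_inf_eq P W
  rw [hPW, finrank_bot] at this
  have := Submodule.finrank_mono (sup_le hPV hWV)
  omega

end Signature

section Blocks

open Sum
open scoped ComplexOrder

variable {m l : ℕ}

abbrev midPart : ((Fin m ⊕ (Fin l ⊕ Fin m)) → ℂ) →ₗ[ℂ] (Fin l → ℂ) :=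
  LinearMap.funLeft ℂ ℂ (inr ∘ inl)

abbrev lastPart : ((Fin m ⊕ (Fin l ⊕ Fin m)) → ℂ) →ₗ[ℂ] (Fin m → ℂ) :=
  LinearMap.funLeft ℂ ℂ (inr ∘ inr)

@[simp]
theorem midPart_elim (a c : Fin m → ℂ) (b : Fin l → ℂ) :
    midPart (Sum.elim a (Sum.elim b c)) = b :=
  rfl

@[simp]
theorem lastPart_elim (a c : Fin m → ℂ) (b : Fin l → ℂ) :
    lastPart (Sum.elim a (Sum.elim b c)) = c :=
  rfl

theorem eq_elim_parts (v : (Fin m ⊕ (Fin l ⊕ Fin m)) → ℂ) :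
    v = Sum.elim (v ∘ inl) (Sum.elim (midPart v) (lastPart v)) := by
  ext (i | j | i) <;> rfl

theorem sform_Hmat_elim (a a' c c' : Fin m → ℂ) (b b' : Fin l → ℂ) :
    sform (Hmat m l) (Sum.elim a (Sum.elim b c)) (Sum.elim a' (Sum.elim b' c')) =
      star a ⬝ᵥ c' - star b ⬝ᵥ b' + star c ⬝ᵥ a' := by
  have hH : Hmat m l *ᵥ Sum.elim a' (Sum.elim b' c') = Sum.elim c' (Sum.elim (-b') a') := by
    ext (i | j | i) <;> simp [Hmat, mulVec, dotProduct, Fintype.sum_sum_type, one_apply]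
  simp only [sform, hH, dotProduct, Fintype.sum_sum_type, Pi.star_apply, Sum.elim_inl,
    Sum.elim_inr, Pi.neg_apply, mul_neg, Finset.sum_neg_distrib]
  ring

theorem sform_Hmat_nonpos_of_lastPart_eq_zero {v : (Fin m ⊕ (Fin l ⊕ Fin m)) → ℂ}
    (hv : lastPart v = 0) : (sform (Hmat m l) v v).re ≤ 0 := by
  rw [eq_elim_parts v, hv, sform_Hmat_elim]
  simpa using (Complex.nonneg_iff.1 (dotProduct_star_self_nonneg (midPart v))).1

theorem mem_vinf {v : (Fin m ⊕ (Fin l ⊕ Fin m)) → ℂ} :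
    v ∈ vinf m l ↔ midPart v = 0 ∧ lastPart v = 0 := by
  constructor
  · rintro ⟨x, rfl⟩
    constructor <;> ext <;> simp [fromRows_mulVec]
  · rintro ⟨h2, h3⟩
    refine ⟨v ∘ inl, ?_⟩
    conv_rhs => rw [eq_elim_parts v, h2, h3]
    ext (i | j | i) <;> simp [fromRows_mulVec]

theorem finrank_vinf : finrank ℂ (vinf m l) = m := by
  rw [vinf, LinearMap.finrank_range_of_inj, finrank_fin_fun]
  intro x y h
  funext i
  simpa [fromRows_mulVec] using congr_fun h (inl i)

noncomputable def graphSubspace (A : Matrix (Fin l) (Fin m) ℂ) :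
    Submodule ℂ ((Fin m ⊕ (Fin l ⊕ Fin m)) → ℂ) :=
  hperp (Hmat m l) (LinearMap.range (Matrix.mulVecLin
    (fromRows Aᴴ (fromRows (1 : Matrix (Fin l) (Fin l) ℂ) (0 : Matrix (Fin m) (Fin l) ℂ)))))

theorem graphSubspace_eq_ker (A : Matrix (Fin l) (Fin m) ℂ) :
    graphSubspace A = LinearMap.ker (midPart - toLin' A ∘ₗ lastPart) := by
  ext w
  have hpair : ∀ y, star w ⬝ᵥ Hmat m l *ᵥ (fromRows Aᴴ (fromRows 1 0) *ᵥ y) =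
      (star (A *ᵥ lastPart w) - star (midPart w)) ⬝ᵥ y := fun y => by
    rw [fromRows_mulVec, fromRows_mulVec, one_mulVec, zero_mulVec]
    change sform _ w _ = _
    nth_rw 1 [eq_elim_parts w]
    rw [sform_Hmat_elim, star_mulVec, dotProduct_mulVec, sub_dotProduct, dotProduct_zero]
    ring
  change (∀ v ∈ LinearMap.range _, _) ↔ _
  simp only [LinearMap.mem_range, forall_exists_index, forall_apply_eq_imp_iff, mulVecLin_apply,
    hpair, dotProduct_eq_zero_iff, sub_eq_zero, star_inj, LinearMap.mem_ker, LinearMap.sub_apply,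
    LinearMap.comp_apply, toLin'_apply]
  exact eq_comm

theorem mem_graphSubspace {A : Matrix (Fin l) (Fin m) ℂ} {w : (Fin m ⊕ (Fin l ⊕ Fin m)) → ℂ} :
    w ∈ graphSubspace A ↔ midPart w = A *ᵥ lastPart w := by
  simp [graphSubspace_eq_ker, sub_eq_zero]

theorem vinf_le_graphSubspace (A : Matrix (Fin l) (Fin m) ℂ) : vinf m l ≤ graphSubspace A :=
  fun w hw => by
    obtain ⟨h2, h3⟩ := mem_vinf.1 hw
    rw [mem_graphSubspace, h2, h3, mulVec_zero]

theorem finrank_graphSubspace (A : Matrix (Fin l) (Fin m) ℂ) :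
    finrank ℂ (graphSubspace A) = 2 * m := by
  have hsurj : LinearMap.range (midPart - toLin' A ∘ₗ lastPart) = ⊤ :=
    LinearMap.range_eq_top.2 fun b => ⟨Sum.elim 0 (Sum.elim b 0), by ext; simp⟩
  have := LinearMap.finrank_range_add_finrank_ker (midPart - toLin' A ∘ₗ lastPart)
  rw [hsurj, finrank_top, ← graphSubspace_eq_ker] at this
  simp only [Module.finrank_fintype_fun_eq_card, Fintype.card_sum,
    Fintype.card_fin] at this
  omega

theorem graphSubspace_injective : Function.Injective (graphSubspace (m := m) (l := l)) := by
  intro A B hAB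
  refine mulVec_injective (funext fun c => ?_)
  have hA : Sum.elim (0 : Fin m → ℂ) (Sum.elim (A *ᵥ c) c) ∈ graphSubspace A :=
    mem_graphSubspace.2 rfl
  rw [hAB] at hA
  exact mem_graphSubspace.1 hA

noncomputable def signedGraphMap (A : Matrix (Fin l) (Fin m) ℂ) (ε : ℝ) :
    (Fin m → ℂ) →ₗ[ℂ] ((Fin m ⊕ (Fin l ⊕ Fin m)) → ℂ) where
  toFun u := Sum.elim ((ε : ℂ) • u + (1 / 2 : ℂ) • (Aᴴ *ᵥ A *ᵥ u)) (Sum.elim (A *ᵥ u) u)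
  map_add' u v := by ext (i | j | i) <;> simp [mulVec_add, add_add_add_comm]
  map_smul' c u := by ext (i | j | i) <;> simp [mulVec_smul, mul_add, mul_left_comm]

theorem re_sform_signedGraphMap (A : Matrix (Fin l) (Fin m) ℂ) (ε : ℝ) (u : Fin m → ℂ) :
    (sform (Hmat m l) (signedGraphMap A ε u) (signedGraphMap A ε u)).re =
      2 * ε * (star u ⬝ᵥ u).re := by
  have hAu : star u ⬝ᵥ Aᴴ *ᵥ A *ᵥ u = star (A *ᵥ u) ⬝ᵥ A *ᵥ u := by
    rw [dotProduct_mulVec, ← star_mulVec]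
  have hAu' : star (Aᴴ *ᵥ A *ᵥ u) ⬝ᵥ u = star (A *ᵥ u) ⬝ᵥ A *ᵥ u := by
    rw [star_mulVec, conjTranspose_conjTranspose, ← dotProduct_mulVec]
  simp only [signedGraphMap, LinearMap.coe_mk, AddHom.coe_mk, sform_Hmat_elim, star_add,
    star_smul, add_dotProduct, dotProduct_add, smul_dotProduct, dotProduct_smul, hAu, hAu']
  simp [Complex.conj_ofReal]
  ring

theorem range_signedGraphMap_le (A : Matrix (Fin l) (Fin m) ℂ) (ε : ℝ) :
    LinearMap.range (signedGraphMap A ε) ≤ graphSubspace A := by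
  rintro _ ⟨u, rfl⟩
  exact mem_graphSubspace.2 rfl

theorem finrank_range_signedGraphMap (A : Matrix (Fin l) (Fin m) ℂ) (ε : ℝ) :
    finrank ℂ (LinearMap.range (signedGraphMap A ε)) = m := by
  rw [LinearMap.finrank_range_of_inj, finrank_fin_fun]
  intro u v h
  exact congr(lastPart $h)

theorem sigOn_graphSubspace (A : Matrix (Fin l) (Fin m) ℂ) :
    SigOn (Hmat m l) (graphSubspace A) m m := by
  have hnorm : ∀ ε u, signedGraphMap A ε u ≠ 0 → 0 < (star u ⬝ᵥ u).re := fun ε u hu =>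
    (Complex.pos_iff.1 (dotProduct_star_self_pos_iff.2 fun h => hu (by rw [h, map_zero]))).1
  simpa only [finrank_range_signedGraphMap] using sigOn_of_definite
    (range_signedGraphMap_le A 1) (range_signedGraphMap_le A (-1))
    (by rintro _ ⟨u, rfl⟩ hu; linarith [re_sform_signedGraphMap A 1 u, hnorm _ u hu])
    (by rintro _ ⟨u, rfl⟩ hu; linarith [re_sform_signedGraphMap A (-1) u, hnorm _ u hu])
    (by simp only [finrank_graphSubspace, finrank_range_signedGraphMap]; omega)

theorem inf_ker_lastPart_eq_vinf {V : Submodule ℂ ((Fin m ⊕ (Fin l ⊕ Fin m)) → ℂ)}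
    (hvinf : vinf m l ≤ V) (hdim : finrank ℂ V = 2 * m) (hsig : SigOn (Hmat m l) V m m) :
    V ⊓ LinearMap.ker lastPart = vinf m l := by
  refine (Submodule.eq_of_le_of_finrank_le (le_inf hvinf fun w hw => (mem_vinf.1 hw).2) ?_).symm
  have := hsig.finrank_add_le_of_nonpos inf_le_left
    fun _ hw => sform_Hmat_nonpos_of_lastPart_eq_zero (LinearMap.mem_ker.1 hw.2)
  rw [finrank_vinf]
  omega

theorem exists_graphSubspace_eq {V : Submodule ℂ ((Fin m ⊕ (Fin l ⊕ Fin m)) → ℂ)}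
    (hvinf : vinf m l ≤ V) (hdim : finrank ℂ V = 2 * m) (hsig : SigOn (Hmat m l) V m m) :
    ∃ A, graphSubspace A = V := by
  obtain ⟨h, hh⟩ := LinearMap.exists_comp_eq_of_ker_le (lastPart ∘ₗ V.subtype)
    (midPart ∘ₗ V.subtype) fun w hw => by
      have hw' : (w : _ → ℂ) ∈ vinf m l := inf_ker_lastPart_eq_vinf hvinf hdim hsig ▸ ⟨w.2, hw⟩
      exact (mem_vinf.1 hw').1
  refine ⟨LinearMap.toMatrix' h, (Submodule.eq_of_le_of_finrank_le (fun w hw => ?_) ?_).symm⟩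
  · rw [mem_graphSubspace, LinearMap.toMatrix'_mulVec]
    exact congr($hh ⟨w, hw⟩).symm
  · rw [finrank_graphSubspace, hdim]

end Blocks

/-- The map `A ↦ (column span of [Aᴴ; 1; 0])^⊥` is a bijection from `M((n-m)×m, ℂ)` onto the
set of `2m`-dimensional subspaces `V` of `ℂ^{m+n}` containing `v_∞` on which `h` has
signature `(m,m)`. Here `l = n - m`. -/
theorem stmt12 (m l : ℕ) :
    Set.BijOn
      (fun A : Matrix (Fin l) (Fin m) ℂ =>
        hperp (Hmat m l) (LinearMap.range (Matrix.mulVecLin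
          (fromRows Aᴴ (fromRows (1 : Matrix (Fin l) (Fin l) ℂ)
            (0 : Matrix (Fin m) (Fin l) ℂ))))))
      Set.univ
      {V : Submodule ℂ ((Fin m ⊕ (Fin l ⊕ Fin m)) → ℂ) |
        vinf m l ≤ V ∧ finrank ℂ V = 2 * m ∧ SigOn (Hmat m l) V m m} := by
  refine ⟨fun A _ => ?_, graphSubspace_injective.injOn, fun V ⟨hvinf, hdim, hsig⟩ => ?_⟩
  · exact ⟨vinf_le_graphSubspace A, finrank_graphSubspace A, sigOn_graphSubspace A⟩
  · obtain ⟨A, rfl⟩ := exists_graphSubspace_eq hvinf hdim hsig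
    exact ⟨A, Set.mem_univ A, rfl⟩
end

section
/- Let G, J be topological groups with G locally compact second countable equipped with a Haar measure, and let π : G → J be a Borel measurable map such that π(xy) = π(x)π(y) for almost every pair (x,y) ∈ G². Then π agrees almost everywhere with a Borel measurable group homomorphism G → J. -/
/-! Shearing `(y, z) ↦ (y, y⁻¹ z)` preserves `μ × μ`, so the a.e. identity
`π(xyz) π(yz)⁻¹ = π(xy) π(y)⁻¹` shows that `y ↦ π(xy) π(y)⁻¹` is a.e. constant for each `x`;
call its a.e. value `π' x`. Left invariance of `μ` makes `π'` multiplicative, Fubini makes it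
measurable, and the a.e. identity `π(xy) = π(x) π(y)` gives `π' = π` almost everywhere. -/

open MeasureTheory

theorem Filter.Eventually.const_eq_of_eq {ι β : Type*} {l : Filter ι} [l.NeBot] {f : ι → β}
    {a b : β} (ha : ∀ᶠ i in l, f i = a) (hb : ∀ᶠ i in l, f i = b) : a = b :=
  Filter.eventually_const.1 ((ha.and hb).mono fun _ hi => hi.1.symm.trans hi.2)

theorem measurable_of_forall_ae_eq_section {α β γ : Type*} [MeasurableSpace α]
    [MeasurableSpace β] [MeasurableSpace γ] {ν : Measure β} [SFinite ν] [NeZero ν]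
    {F : α × β → γ} (hF : Measurable F) {g : α → γ} (hg : ∀ x, ∀ᵐ y ∂ν, F (x, y) = g x) :
    Measurable g := by
  intro S hS
  have hnull : Measurable fun x => ν (Prod.mk x ⁻¹' (F ⁻¹' Sᶜ)) :=
    measurable_measure_prodMk_left (hF hS.compl)
  convert hnull (measurableSet_singleton 0) using 1
  ext x
  have hx : (∀ᵐ y ∂ν, F (x, y) ∈ S) ↔ g x ∈ S :=
    (Filter.eventually_congr ((hg x).mono fun y hy => by rw [hy])).trans Filter.eventually_const
  simp only [Set.mem_preimage, Set.mem_singleton_iff, measure_eq_zero_iff_ae_notMem,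
    Set.mem_compl_iff, not_not, hx]

section AlmostHom

variable {G J : Type*} [Group G] [MeasurableSpace G] {μ : Measure G} [NeZero μ] [Group J]
  {π π' : G → J}

theorem exists_ae_mul_mul_inv_eq [MeasurableMul₂ G] [MeasurableInv G] [SFinite μ]
    [μ.IsMulLeftInvariant] (h : ∀ᵐ p ∂μ.prod μ, π (p.1 * p.2) = π p.1 * π p.2) (x : G) :
    ∃ c, ∀ᵐ y ∂μ, π (x * y) * (π y)⁻¹ = c := by
  have hx : ∀ᵐ p ∂μ.prod μ, π (x * p.1 * p.2) = π (x * p.1) * π p.2 :=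
    ((measurePreserving_mul_left μ x).prod (.id μ)).quasiMeasurePreserving.tendsto_ae.eventually h
  have hshift : ∀ᵐ p ∂μ.prod μ,
      π (x * (p.1 * p.2)) * (π (p.1 * p.2))⁻¹ = π (x * p.1) * (π p.1)⁻¹ := by
    filter_upwards [hx, h] with p hxp hp
    rw [← mul_assoc, hxp, hp]
    group
  have hsheared : ∀ᵐ p ∂μ.prod μ, π (x * p.2) * (π p.2)⁻¹ = π (x * p.1) * (π p.1)⁻¹ := by
    simpa using (measurePreserving_prod_inv_mul μ μ).quasiMeasurePreserving.tendsto_ae.eventually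
      hshift
  obtain ⟨a, ha⟩ := (Measure.ae_ae_of_ae_prod hsheared).exists
  exact ⟨π (x * a) * (π a)⁻¹, ha⟩

theorem map_mul_of_ae_mul_mul_inv_eq [MeasurableMul G] [μ.IsMulLeftInvariant]
    (hπ' : ∀ x, ∀ᵐ y ∂μ, π (x * y) * (π y)⁻¹ = π' x) (a b : G) :
    π' (a * b) = π' a * π' b := by
  have ha : ∀ᵐ y ∂μ, π (a * (b * y)) * (π (b * y))⁻¹ = π' a :=
    (measurePreserving_mul_left μ b).quasiMeasurePreserving.tendsto_ae.eventually (hπ' a)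
  refine (hπ' (a * b)).const_eq_of_eq ?_
  filter_upwards [ha, hπ' b] with y hay hby
  calc π (a * b * y) * (π y)⁻¹
      = π (a * (b * y)) * (π (b * y))⁻¹ * (π (b * y) * (π y)⁻¹) := by rw [mul_assoc a b y]; group
    _ = π' a * π' b := by rw [hay, hby]

theorem ae_eq_of_ae_mul_mul_inv_eq [SFinite μ] (hπ' : ∀ x, ∀ᵐ y ∂μ, π (x * y) * (π y)⁻¹ = π' x)
    (h : ∀ᵐ p ∂μ.prod μ, π (p.1 * p.2) = π p.1 * π p.2) : π' =ᵐ[μ] π := by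
  filter_upwards [Measure.ae_ae_of_ae_prod h] with a ha
  refine (hπ' a).const_eq_of_eq ?_
  filter_upwards [ha] with b hb
  rw [hb, mul_inv_cancel_right]

theorem measurable_of_ae_mul_mul_inv_eq [MeasurableMul₂ G] [SFinite μ] [MeasurableSpace J]
    [MeasurableMul₂ J] [MeasurableInv J] (hπ : Measurable π)
    (hπ' : ∀ x, ∀ᵐ y ∂μ, π (x * y) * (π y)⁻¹ = π' x) : Measurable π' :=
  measurable_of_forall_ae_eq_section
    ((hπ.comp measurable_mul).mul (hπ.comp measurable_snd).inv) hπ'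

end AlmostHom

/-- Almost-homomorphism rigidity: if `G` is a locally compact second countable group with
Haar measure `μ`, `J` a second countable topological group, and `π : G → J` is Borel
measurable with `π(xy) = π(x)π(y)` for almost every pair `(x,y)`, then `π` agrees
almost everywhere with a Borel measurable group homomorphism. -/
theorem stmt17 {G J : Type*}
    [TopologicalSpace G] [Group G] [IsTopologicalGroup G]
    [LocallyCompactSpace G] [SecondCountableTopology G]
    [MeasurableSpace G] [BorelSpace G]
    [TopologicalSpace J] [Group J] [IsTopologicalGroup J] [SecondCountableTopology J]
    [MeasurableSpace J] [BorelSpace J]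
    (μ : Measure G) [μ.IsHaarMeasure]
    (π : G → J) (hπ : Measurable π)
    (h : ∀ᵐ p ∂(μ.prod μ), π (p.1 * p.2) = π p.1 * π p.2) :
    ∃ π' : G → J, Measurable π' ∧ (∀ x y : G, π' (x * y) = π' x * π' y) ∧
      π' =ᵐ[μ] π := by
  choose π' hπ' using exists_ae_mul_mul_inv_eq h
  exact ⟨π', measurable_of_ae_mul_mul_inv_eq hπ hπ', map_mul_of_ae_mul_mul_inv_eq hπ',
    ae_eq_of_ae_mul_mul_inv_eq hπ' h⟩
end
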